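/- arXiv:1711.05289 — 10 statements merged into one kernel-verified Lean document; each statement's English description precedes it below -/
import Mathlib

section
/- Existence of greatest and least fractional clearing vectors (extended Eisenberg–Noe theorem): for any exposure matrix Ω and any nonnegative vectors A, C, D in ℝ^N, the Eisenberg–Noe clearing map F has a greatest fixed point p̂ and a least fixed point p̌ in [0,1]^N; that is, p̂ = F(p̂), p̌ = F(p̌), and every fixed point p ∈ [0,1]^N of F satisfies p̌ ≤ p ≤ p̂ in the componentwise order. -/
open Finset

/-- The Eisenberg–Noe clearing map: `F i p = 0` when the nominal interbank
liability `X i = ∑ j, Ω i j` vanishes, and otherwise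
`F i p = min(1, max(0, (A i + C i − D i + ∑ j, Ω j i * p j) / X i))`. -/
noncomputable def ENmap {N : ℕ} (Ω : Fin N → Fin N → ℝ) (A C D : Fin N → ℝ)
    (p : Fin N → ℝ) : Fin N → ℝ := fun i =>
  if (∑ j, Ω i j) = 0 then 0
  else min 1 (max 0 ((A i + C i - D i + ∑ j, Ω j i * p j) / ∑ j, Ω i j))

/-- Existence of greatest and least fractional clearing vectors for the
extended Eisenberg–Noe model. -/
theorem EN_greatest_least_clearing_vector {N : ℕ} (hN : 1 ≤ N)
    (Ω : Fin N → Fin N → ℝ) (hΩ : ∀ i j, 0 ≤ Ω i j) (hdiag : ∀ i, Ω i i = 0)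
    (A C D : Fin N → ℝ) (hA : ∀ i, 0 ≤ A i) (hC : ∀ i, 0 ≤ C i)
    (hD : ∀ i, 0 ≤ D i) :
    ∃ phat pcheck : Fin N → ℝ,
      (∀ i, phat i ∈ Set.Icc (0 : ℝ) 1) ∧
      (∀ i, pcheck i ∈ Set.Icc (0 : ℝ) 1) ∧
      ENmap Ω A C D phat = phat ∧
      ENmap Ω A C D pcheck = pcheck ∧
      (∀ p : Fin N → ℝ, (∀ i, p i ∈ Set.Icc (0 : ℝ) 1) →
        ENmap Ω A C D p = p → (∀ i, pcheck i ≤ p i) ∧ (∀ i, p i ≤ phat i)) := by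
  
  haveI : Fact ((0:ℝ) ≤ 1) := ⟨zero_le_one⟩
  -- membership
  have hmem : ∀ p : Fin N → ℝ, ∀ i, ENmap Ω A C D p i ∈ Set.Icc (0:ℝ) 1 := by
    intro p i
    unfold ENmap
    split
    · exact ⟨le_refl 0, zero_le_one⟩
    · constructor
      · exact le_min zero_le_one (le_max_left _ _)
      · exact min_le_left _ _
  -- monotone
  have hmono : ∀ p q : Fin N → ℝ, (∀ j, p j ≤ q j) → ∀ i,
      ENmap Ω A C D p i ≤ ENmap Ω A C D q i := by
    intro p q hpq i
    unfold ENmap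
    split
    · exact le_refl 0
    · rename_i hX
      have hXpos : 0 < ∑ j, Ω i j :=
        lt_of_le_of_ne (Finset.sum_nonneg fun j _ => hΩ i j) (Ne.symm hX)
      apply min_le_min (le_refl 1)
      apply max_le_max (le_refl 0)
      apply div_le_div_of_nonneg_right ?_ hXpos.le
      gcongr
      · exact hΩ _ i
      · exact hpq _
  set I := Set.Icc (0:ℝ) 1
  let G : (Fin N → I) →o (Fin N → I) :=
    ⟨fun q i => ⟨ENmap Ω A C D (fun j => (q j : ℝ)) i,
        hmem _ i⟩,
      by
        intro p q hpq i
        exact hmono _ _ (fun j => hpq j) i⟩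
  refine ⟨fun i => (G.gfp i : ℝ), fun i => (G.lfp i : ℝ),
    fun i => (G.gfp i).2, fun i => (G.lfp i).2, ?_, ?_, ?_⟩
  · funext i
    have := congrFun (G.map_gfp) i
    exact congrArg Subtype.val this
  · funext i
    have := congrFun (G.map_lfp) i
    exact congrArg Subtype.val this
  · intro p hp hfix
    set q : Fin N → I := fun i => ⟨p i, hp i⟩ with hq
    have hGq : G q = q := by
      funext i
      apply Subtype.ext
      show ENmap Ω A C D (fun j => p j) i = p i
      exact congrFun hfix i
    constructor
    · intro i
      exact Subtype.coe_le_coe.mpr (G.lfp_le_fixed hGq i)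
    · intro i
      exact Subtype.coe_le_coe.mpr (G.le_gfp hGq.ge i)
end

section
/- The set of fractional clearing vectors, i.e. the set of fixed points of the Eisenberg–Noe clearing map F in [0,1]^N ordered componentwise, is a nonempty complete lattice: every subset of the fixed-point set has a greatest lower bound and a least upper bound that are themselves fixed points of F. -/
open Finset

lemma ENmap_mem {N : ℕ} (Ω : Fin N → Fin N → ℝ) (A C D : Fin N → ℝ)
    (p : Fin N → ℝ) (i : Fin N) : ENmap Ω A C D p i ∈ Set.Icc (0:ℝ) 1 := by
  unfold ENmap
  split
  · exact ⟨le_refl 0, zero_le_one⟩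
  · exact ⟨le_min zero_le_one (le_max_left _ _), min_le_left _ _⟩

noncomputable def ENunit {N : ℕ} (Ω : Fin N → Fin N → ℝ) (A C D : Fin N → ℝ)
    (p : Fin N → Set.Icc (0:ℝ) 1) : Fin N → Set.Icc (0:ℝ) 1 := fun i =>
  ⟨ENmap Ω A C D (fun j => (p j : ℝ)) i, ENmap_mem _ _ _ _ _ _⟩

lemma ENunit_mono {N : ℕ} (Ω : Fin N → Fin N → ℝ) (hΩ : ∀ i j, 0 ≤ Ω i j)
    (A C D : Fin N → ℝ) : Monotone (ENunit Ω A C D) := by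
  intro p q hpq i
  show (ENunit Ω A C D p i : ℝ) ≤ ENunit Ω A C D q i
  unfold ENunit ENmap
  dsimp only
  split
  · exact le_refl 0
  · rename_i h
    have hpos : 0 < ∑ j, Ω i j :=
      lt_of_le_of_ne (Finset.sum_nonneg fun j _ => hΩ i j) (Ne.symm h)
    refine min_le_min le_rfl (max_le_max le_rfl ?_)
    rw [div_le_div_iff_of_pos_right hpos]
    have hsum : (∑ j, Ω j i * (p j : ℝ)) ≤ ∑ j, Ω j i * (q j : ℝ) :=
      Finset.sum_le_sum fun j _ => mul_le_mul_of_nonneg_left (hpq j) (hΩ j i)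
    linarith

/-- The set of fractional clearing vectors (fixed points of the Eisenberg–Noe
clearing map in `[0,1]^N`, ordered componentwise) is a nonempty complete
lattice: every subset has a greatest lower bound and a least upper bound that
are themselves fixed points. -/
theorem EN_fixedPoints_completeLattice {N : ℕ} (hN : 1 ≤ N)
    (Ω : Fin N → Fin N → ℝ) (hΩ : ∀ i j, 0 ≤ Ω i j) (hdiag : ∀ i, Ω i i = 0)
    (A C D : Fin N → ℝ) (hA : ∀ i, 0 ≤ A i) (hC : ∀ i, 0 ≤ C i)
    (hD : ∀ i, 0 ≤ D i) :
    let Fix : Set (Fin N → ℝ) :=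
      {p | (∀ i, p i ∈ Set.Icc (0 : ℝ) 1) ∧ ENmap Ω A C D p = p}
    Fix.Nonempty ∧
    ∀ S ⊆ Fix,
      (∃ g ∈ Fix, (∀ p ∈ S, ∀ i, g i ≤ p i) ∧
        (∀ q ∈ Fix, (∀ p ∈ S, ∀ i, q i ≤ p i) → ∀ i, q i ≤ g i)) ∧
      (∃ l ∈ Fix, (∀ p ∈ S, ∀ i, p i ≤ l i) ∧
        (∀ q ∈ Fix, (∀ p ∈ S, ∀ i, p i ≤ q i) → ∀ i, l i ≤ q i)) := by
  intro Fix
  haveI : Fact ((0:ℝ) ≤ 1) := ⟨zero_le_one⟩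
  set f : (Fin N → Set.Icc (0:ℝ) 1) →o (Fin N → Set.Icc (0:ℝ) 1) :=
    ⟨ENunit Ω A C D, ENunit_mono Ω hΩ A C D⟩ with hf
  -- translation between Fix and fixedPoints f
  have toFix : ∀ u : Fin N → Set.Icc (0:ℝ) 1, u ∈ Function.fixedPoints f →
      (fun i => (u i : ℝ)) ∈ Fix := by
    intro u hu
    refine ⟨fun i => (u i).2, ?_⟩
    funext i
    have := congrFun hu i
    exact congrArg Subtype.val this
  have ofFix : ∀ p ∈ Fix, ∃ u ∈ Function.fixedPoints f, (fun i => (u i : ℝ)) = p := by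
    intro p hp
    refine ⟨fun i => ⟨p i, hp.1 i⟩, ?_, rfl⟩
    show ENunit Ω A C D _ = _
    funext i
    exact Subtype.ext (congrFun hp.2 i)
  constructor
  · obtain ⟨u, hu⟩ : (Function.fixedPoints f).Nonempty := ⟨_, f.isFixedPt_lfp⟩
    exact ⟨_, toFix u hu⟩
  · intro S hS
    constructor
    · -- greatest lower bound
      set S' : Set (Function.fixedPoints f) := {u | (fun i => ((u : Fin N → Set.Icc (0:ℝ) 1) i : ℝ)) ∈ S} with hS'
      set g := sInf S' with hg
      have hglb := isGLB_sInf S'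
      refine ⟨fun i => ((g : Fin N → Set.Icc (0:ℝ) 1) i : ℝ), toFix _ g.2, ?_, ?_⟩
      · intro p hp i
        obtain ⟨u, hu, hup⟩ := ofFix p (hS hp)
        have : (⟨u, hu⟩ : Function.fixedPoints f) ∈ S' := by
          simp only [hS', Set.mem_setOf_eq]; rw [hup]; exact hp
        have hle := hglb.1 this
        have := hle i
        rw [← hup]
        exact this
      · intro q hq hql i
        obtain ⟨uq, huq, hup⟩ := ofFix q hq
        have : (⟨uq, huq⟩ : Function.fixedPoints f) ∈ lowerBounds S' := by
          intro u hu
          intro i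
          show (uq i : ℝ) ≤ _
          have := hql _ hu i
          rw [← hup] at this
          simpa using this
        have hle := hglb.2 this
        have := hle i
        rw [← hup]
        exact this
    · -- least upper bound
      set S' : Set (Function.fixedPoints f) := {u | (fun i => ((u : Fin N → Set.Icc (0:ℝ) 1) i : ℝ)) ∈ S} with hS'
      set l := sSup S' with hl
      have hlub := isLUB_sSup S'
      refine ⟨fun i => ((l : Fin N → Set.Icc (0:ℝ) 1) i : ℝ), toFix _ l.2, ?_, ?_⟩
      · intro p hp i
        obtain ⟨u, hu, hup⟩ := ofFix p (hS hp)
        have : (⟨u, hu⟩ : Function.fixedPoints f) ∈ S' := by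
          simp only [hS', Set.mem_setOf_eq]; rw [hup]; exact hp
        have hle := hlub.1 this
        have := hle i
        rw [← hup]
        exact this
      · intro q hq hql i
        obtain ⟨uq, huq, hup⟩ := ofFix q hq
        have : (⟨uq, huq⟩ : Function.fixedPoints f) ∈ upperBounds S' := by
          intro u hu i
          show ((u : Fin N → Set.Icc (0:ℝ) 1) i : ℝ) ≤ uq i
          have := hql _ hu i
          rw [← hup] at this
          simpa using this
        have hle := hlub.2 this
        have := hle i
        rw [← hup]
        exact this
end

section
/- Convergence of the Eisenberg–Noe cascade iteration: the iterates p^(n) = F(p^(n−1)) started from p^(0) = 1 (the all-ones vector) form a componentwise nonincreasing sequence that converges to the greatest fixed point p̂ of F in [0,1]^N; dually, the iterates started from p^(0) = 0 form a componentwise nondecreasing sequence that converges to the least fixed point p̌ of F in [0,1]^N. -/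
/-!
The clearing map `F` is monotone and continuous and maps everything into `[0,1]^N`.
Hence `F 1 ≤ 1` makes the iterates from `1` decrease; they converge to their infimum, which
is a fixed point by continuity, and it dominates every fixed point `p ≤ 1` because
`p = F^[n] p ≤ F^[n] 1` by monotonicity. The iterates from `0` are handled dually.
-/

open Finset

open Filter Set Function Topology

section IterateFixedPoint

variable {α : Type*} [ConditionallyCompleteLattice α] {f : α → α} {x y : α}

theorem Monotone.le_ciInf_iterate_of_isFixedPt (hf : Monotone f) (hy : IsFixedPt f y)
    (hyx : y ≤ x) : y ≤ ⨅ n, f^[n] x :=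
  le_ciInf fun n => (hy.iterate n).symm.le.trans (hf.iterate n hyx)

theorem Monotone.ciSup_iterate_le_of_isFixedPt (hf : Monotone f) (hy : IsFixedPt f y)
    (hxy : x ≤ y) : ⨆ n, f^[n] x ≤ y :=
  ciSup_le fun n => (hf.iterate n hxy).trans (hy.iterate n).le

variable [TopologicalSpace α]

theorem Monotone.tendsto_iterate_ciInf (hf : Monotone f) (hx : f x ≤ x)
    (hb : BddBelow (range fun n => f^[n] x)) [InfConvergenceClass α] :
    Tendsto (fun n => f^[n] x) atTop (𝓝 (⨅ n, f^[n] x)) :=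
  tendsto_atTop_ciInf (hf.antitone_iterate_of_map_le hx) hb

theorem Monotone.tendsto_iterate_ciSup (hf : Monotone f) (hx : x ≤ f x)
    (hb : BddAbove (range fun n => f^[n] x)) [SupConvergenceClass α] :
    Tendsto (fun n => f^[n] x) atTop (𝓝 (⨆ n, f^[n] x)) :=
  tendsto_atTop_ciSup (hf.monotone_iterate_of_le_map hx) hb

end IterateFixedPoint

section ClearingMap

variable {N : ℕ} (Ω : Fin N → Fin N → ℝ) (A C D : Fin N → ℝ)

theorem ENmap_apply_mem_Icc (p : Fin N → ℝ) (i : Fin N) : ENmap Ω A C D p i ∈ Set.Icc 0 1 := by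
  simp only [ENmap]
  split_ifs
  · exact ⟨le_rfl, zero_le_one⟩
  · exact ⟨le_min zero_le_one (le_max_left _ _), min_le_left _ _⟩

theorem mapsTo_ENmap_Icc : MapsTo (ENmap Ω A C D) (Set.Icc 0 1) (Set.Icc 0 1) :=
  fun p _ => ⟨fun i => (ENmap_apply_mem_Icc Ω A C D p i).1,
    fun i => (ENmap_apply_mem_Icc Ω A C D p i).2⟩

theorem continuous_ENmap : Continuous (ENmap Ω A C D) := by
  refine continuous_pi fun i => ?_
  simp only [ENmap]
  split_ifs
  · exact continuous_const
  · fun_prop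

theorem monotone_ENmap (hΩ : ∀ i j, 0 ≤ Ω i j) : Monotone (ENmap Ω A C D) := by
  intro p q hpq i
  simp only [ENmap]
  split_ifs with hX
  · exact le_rfl
  have hXpos : 0 < ∑ j, Ω i j := (sum_nonneg fun j _ => hΩ i j).lt_of_ne' hX
  have hpay : ∑ j, Ω j i * p j ≤ ∑ j, Ω j i * q j :=
    sum_le_sum fun j _ => mul_le_mul_of_nonneg_left (hpq j) (hΩ j i)
  gcongr

end ClearingMap

theorem EN_cascade_convergence_general {N : ℕ}
    (Ω : Fin N → Fin N → ℝ) (hΩ : ∀ i j, 0 ≤ Ω i j)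
    (A C D : Fin N → ℝ) :
    ∃ phat pcheck : Fin N → ℝ,
      -- phat and pcheck are fixed points in [0,1]^N
      (∀ i, phat i ∈ Set.Icc (0 : ℝ) 1) ∧ ENmap Ω A C D phat = phat ∧
      (∀ i, pcheck i ∈ Set.Icc (0 : ℝ) 1) ∧ ENmap Ω A C D pcheck = pcheck ∧
      -- phat is the greatest and pcheck the least fixed point in [0,1]^N
      (∀ p : Fin N → ℝ, (∀ i, p i ∈ Set.Icc (0 : ℝ) 1) →
        ENmap Ω A C D p = p → (∀ i, pcheck i ≤ p i) ∧ (∀ i, p i ≤ phat i)) ∧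
      -- the iterates from the all-ones vector are componentwise nonincreasing
      (∀ n : ℕ, ∀ i, (ENmap Ω A C D)^[n + 1] (1 : Fin N → ℝ) i ≤
        (ENmap Ω A C D)^[n] (1 : Fin N → ℝ) i) ∧
      -- and converge to phat
      Filter.Tendsto (fun n => (ENmap Ω A C D)^[n] (1 : Fin N → ℝ))
        Filter.atTop (nhds phat) ∧
      -- the iterates from the zero vector are componentwise nondecreasing
      (∀ n : ℕ, ∀ i, (ENmap Ω A C D)^[n] (0 : Fin N → ℝ) i ≤
        (ENmap Ω A C D)^[n + 1] (0 : Fin N → ℝ) i) ∧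
      -- and converge to pcheck
      Filter.Tendsto (fun n => (ENmap Ω A C D)^[n] (0 : Fin N → ℝ))
        Filter.atTop (nhds pcheck) := by
  set F := ENmap Ω A C D
  have hmono := monotone_ENmap Ω A C D hΩ
  have hcont := continuous_ENmap Ω A C D
  have hIcc := mapsTo_ENmap_Icc Ω A C D
  have hdown : F 1 ≤ 1 := fun i => (ENmap_apply_mem_Icc Ω A C D 1 i).2
  have hup : 0 ≤ F 0 := fun i => (ENmap_apply_mem_Icc Ω A C D 0 i).1
  have hlim1 := hmono.tendsto_iterate_ciInf hdown
    ⟨0, forall_mem_range.2 fun n => (hIcc.iterate n ⟨zero_le_one, le_rfl⟩).1⟩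
  have hlim0 := hmono.tendsto_iterate_ciSup hup
    ⟨1, forall_mem_range.2 fun n => (hIcc.iterate n ⟨le_rfl, zero_le_one⟩).2⟩
  have hfix1 : IsFixedPt F _ := isFixedPt_of_tendsto_iterate hlim1 hcont.continuousAt
  have hfix0 : IsFixedPt F _ := isFixedPt_of_tendsto_iterate hlim0 hcont.continuousAt
  refine ⟨_, _, fun i => hfix1.eq ▸ ENmap_apply_mem_Icc Ω A C D _ i, hfix1,
    fun i => hfix0.eq ▸ ENmap_apply_mem_Icc Ω A C D _ i, hfix0, fun p hp hpfix => ?_,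
    fun n => hmono.antitone_iterate_of_map_le hdown n.le_succ, hlim1,
    fun n => hmono.monotone_iterate_of_le_map hup n.le_succ, hlim0⟩
  exact ⟨hmono.ciSup_iterate_le_of_isFixedPt hpfix fun i => (hp i).1,
    hmono.le_ciInf_iterate_of_isFixedPt hpfix fun i => (hp i).2⟩

/-- Convergence of the Eisenberg–Noe cascade iteration: the iterates started
from the all-ones vector form a componentwise nonincreasing sequence converging
to the greatest fixed point of the clearing map in `[0,1]^N`; dually, the
iterates started from the zero vector form a componentwise nondecreasing
sequence converging to the least fixed point. -/
theorem EN_cascade_convergence {N : ℕ} (hN : 1 ≤ N)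
    (Ω : Fin N → Fin N → ℝ) (hΩ : ∀ i j, 0 ≤ Ω i j) (hdiag : ∀ i, Ω i i = 0)
    (A C D : Fin N → ℝ) (hA : ∀ i, 0 ≤ A i) (hC : ∀ i, 0 ≤ C i)
    (hD : ∀ i, 0 ≤ D i) :
    ∃ phat pcheck : Fin N → ℝ,
      -- phat and pcheck are fixed points in [0,1]^N
      (∀ i, phat i ∈ Set.Icc (0 : ℝ) 1) ∧ ENmap Ω A C D phat = phat ∧
      (∀ i, pcheck i ∈ Set.Icc (0 : ℝ) 1) ∧ ENmap Ω A C D pcheck = pcheck ∧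
      -- phat is the greatest and pcheck the least fixed point in [0,1]^N
      (∀ p : Fin N → ℝ, (∀ i, p i ∈ Set.Icc (0 : ℝ) 1) →
        ENmap Ω A C D p = p → (∀ i, pcheck i ≤ p i) ∧ (∀ i, p i ≤ phat i)) ∧
      -- the iterates from the all-ones vector are componentwise nonincreasing
      (∀ n : ℕ, ∀ i, (ENmap Ω A C D)^[n + 1] (1 : Fin N → ℝ) i ≤
        (ENmap Ω A C D)^[n] (1 : Fin N → ℝ) i) ∧
      -- and converge to phat
      Filter.Tendsto (fun n => (ENmap Ω A C D)^[n] (1 : Fin N → ℝ))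
        Filter.atTop (nhds phat) ∧
      -- the iterates from the zero vector are componentwise nondecreasing
      (∀ n : ℕ, ∀ i, (ENmap Ω A C D)^[n] (0 : Fin N → ℝ) i ≤
        (ENmap Ω A C D)^[n + 1] (0 : Fin N → ℝ) i) ∧
      -- and converge to pcheck
      Filter.Tendsto (fun n => (ENmap Ω A C D)^[n] (0 : Fin N → ℝ))
        Filter.atTop (nhds pcheck) :=
  EN_cascade_convergence_general Ω hΩ A C D
end

section
/- Buffer–equity positive-part identity: let E, Δ, X, X₀, D, D₀ be real numbers with 0 ≤ X ≤ X₀, 0 ≤ D ≤ D₀, Δ = E − (X₀ − X) − (D₀ − D), and suppose that E > −X implies D = D₀ and that E > 0 implies X = X₀. Then (X + E)^+ = (X₀ + Δ)^+ and (E)^+ = (Δ)^+. -/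
/-- Buffer–equity positive-part identity for the Eisenberg–Noe solvency
cascade: under the stated relations between the current equity `E`, the
current/initial interbank debt `X`, `X₀`, the current/initial external debt
`D`, `D₀` and the default buffer `Δ`, one has `(X+E)⁺ = (X₀+Δ)⁺` and
`E⁺ = Δ⁺`. -/
theorem buffer_equity_posPart (E Δ X X₀ D D₀ : ℝ)
    (hX0 : 0 ≤ X) (hXX : X ≤ X₀) (hD0 : 0 ≤ D) (hDD : D ≤ D₀)
    (hΔ : Δ = E - (X₀ - X) - (D₀ - D))
    (h1 : -X < E → D = D₀) (h2 : 0 < E → X = X₀) :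
    max (X + E) 0 = max (X₀ + Δ) 0 ∧ max E 0 = max Δ 0 := by
  by_cases hE : 0 < E
  · have hx := h2 hE
    have hd := h1 (by linarith)
    constructor <;> congr 1 <;> linarith
  · push_neg at hE
    by_cases hXE : -X < E
    · have hd := h1 hXE
      constructor
      · congr 1; linarith
      · rw [max_eq_right hE, max_eq_right (by linarith : Δ ≤ 0)]
    · push_neg at hXE
      constructor
      · rw [max_eq_right (by linarith : X + E ≤ 0),
          max_eq_right (by linarith : X₀ + Δ ≤ 0)]
      · rw [max_eq_right (by linarith : E ≤ 0),
          max_eq_right (by linarith : Δ ≤ 0)]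
end

section
/- Exact restructuring of an insolvent bank: let X > 0, D > 0 and E be real numbers with E ≥ −X − D, and set ṗ = h(E/X) and q̇ = h((X + E)/D), where h(x) = min(1, max(0, x+1)). Then ṗ·X + q̇·D = X + D + min(E, 0) = X + D − (E)^−. In particular, if E < 0 (an insolvent bank) the restructured total debt ṗ·X + q̇·D equals X + D + E, so the bank's equity after restructuring is exactly zero. -/
/-- The threshold function `h(x) = min(1, max(0, x+1))`. -/
noncomputable def hthr (x : ℝ) : ℝ := min 1 (max 0 (x + 1))

/-- Exact restructuring of an insolvent bank: with `ṗ = h(E/X)` and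
`q̇ = h((X+E)/D)`, the restructured total debt satisfies
`ṗ·X + q̇·D = X + D + min(E,0) = X + D − E⁻`; in particular if `E < 0` it
equals `X + D + E`, so the bank's equity after restructuring is zero. -/
theorem insolvent_exact_restructuring (X D E : ℝ)
    (hX : 0 < X) (hD : 0 < D) (hE : -X - D ≤ E) :
    hthr (E / X) * X + hthr ((X + E) / D) * D = X + D + min E 0 ∧
    hthr (E / X) * X + hthr ((X + E) / D) * D = X + D - max (-E) 0 ∧
    (E < 0 → hthr (E / X) * X + hthr ((X + E) / D) * D = X + D + E) := by
  have key : hthr (E / X) * X + hthr ((X + E) / D) * D = X + D + min E 0 := by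
    unfold hthr
    rcases le_or_gt 0 E with h0 | h0
    · have h1 : (0:ℝ) ≤ E / X := div_nonneg h0 hX.le
      have h2 : (0:ℝ) ≤ (X + E) / D := div_nonneg (by linarith) hD.le
      rw [max_eq_right (by linarith), max_eq_right (by linarith),
        min_eq_left (by linarith), min_eq_left (by linarith),
        min_eq_right h0]
      ring
    · rcases le_or_gt (-X) E with h1 | h1
      · have ha : -1 ≤ E / X := by
          rw [le_div_iff₀ hX]; linarith
        have hb : E / X < 0 := div_neg_of_neg_of_pos h0 hX
        have h2 : (0:ℝ) ≤ (X + E) / D := div_nonneg (by linarith) hD.le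
        rw [max_eq_right (by linarith), max_eq_right (by linarith),
          min_eq_right (by linarith), min_eq_left (by linarith),
          min_eq_left h0.le]
        field_simp
        ring
      · have ha : E / X < -1 := by
          rw [div_lt_iff₀ hX]; linarith
        have hb : (X + E) / D < 0 := div_neg_of_neg_of_pos (by linarith) hD
        have hc : -1 ≤ (X + E) / D := by
          rw [le_div_iff₀ hD]; linarith
        rw [max_eq_left (by linarith), max_eq_right (by linarith),
          min_eq_right (by linarith), min_eq_right (by linarith),
          min_eq_left h0.le]
        field_simp
        ring
  refine ⟨key, ?_, fun hneg => ?_⟩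
  · rw [key]
    rcases le_or_gt 0 E with h | h
    · rw [min_eq_right h, max_eq_right (by linarith)]; ring
    · rw [min_eq_left h.le, max_eq_left (by linarith)]; ring
  · rw [key, min_eq_left hneg.le]
end

section
/- Exact liquidation by an illiquid bank: let Z > 0, A > 0 and C be real numbers with C ≥ −Z − A, and set p̃ = h(C/Z) and q̃ = h((C + Z)/A), where h(x) = min(1, max(0, x+1)). Then (1 − p̃)·Z + (1 − q̃)·A = (C)^−. In particular, if C < 0 (an illiquid bank) the total value of interbank and external assets sold equals −C, exactly enough cash to repay the bank's overdraft. -/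
theorem one_sub_hthr_div_mul {Z : ℝ} (hZ : 0 < Z) (c : ℝ) :
    (1 - hthr (c / Z)) * Z = min (max (-c) 0) Z := by
  obtain ⟨x, rfl⟩ : ∃ x, c = x * Z := ⟨c / Z, (div_mul_cancel₀ c hZ.ne').symm⟩
  rw [mul_div_cancel_right₀ x hZ.ne', hthr]
  rcases le_total x (-1) with hx | hx
  · rw [max_eq_left (by linarith), min_eq_right zero_le_one,
      min_eq_right (le_max_of_le_left (by nlinarith))]
    ring
  rcases le_total x 0 with hx' | hx'
  · rw [max_eq_right (by linarith), min_eq_right (by linarith),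
      max_eq_left (by nlinarith), min_eq_left (by nlinarith)]
    ring
  · rw [max_eq_right (by linarith), min_eq_left (by linarith),
      max_eq_right (by nlinarith), min_eq_left hZ.le]
    ring

theorem min_max_zero_add_max_sub_zero {Z : ℝ} (hZ : 0 ≤ Z) (x : ℝ) :
    min (max x 0) Z + max (x - Z) 0 = max x 0 := by
  rcases le_total x Z with hxZ | hxZ
  · rw [min_eq_left (max_le hxZ hZ), max_eq_right (sub_nonpos.2 hxZ), add_zero]
  · rw [min_eq_right (le_max_of_le_left hxZ), max_eq_left (sub_nonneg.2 hxZ),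
      max_eq_left (hZ.trans hxZ)]
    ring

/-- Exact liquidation by an illiquid bank: with `p̃ = h(C/Z)` and
`q̃ = h((C+Z)/A)`, the total value of assets sold satisfies
`(1 − p̃)·Z + (1 − q̃)·A = C⁻`; in particular if `C < 0` it equals `−C`,
exactly enough cash to repay the bank's overdraft. -/
theorem illiquid_exact_liquidation (Z A C : ℝ)
    (hZ : 0 < Z) (hA : 0 < A) (hC : -Z - A ≤ C) :
    (1 - hthr (C / Z)) * Z + (1 - hthr ((C + Z) / A)) * A = max (-C) 0 ∧
    (C < 0 → (1 - hthr (C / Z)) * Z + (1 - hthr ((C + Z) / A)) * A = -C) := by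
  have interbank := one_sub_hthr_div_mul hZ C
  have external := one_sub_hthr_div_mul hA (C + Z)
  rw [min_eq_left (max_le (by linarith) hA.le), neg_add'] at external
  have key : (1 - hthr (C / Z)) * Z + (1 - hthr ((C + Z) / A)) * A = max (-C) 0 := by
    rw [interbank, external, min_max_zero_add_max_sub_zero hZ.le]
  exact ⟨key, fun hneg => key.trans (max_eq_left (by linarith))⟩
end

section
/- Monotonicity of the Solvency-Liquidity cascade: along the SL cascade iterates started from p^(0) = p̃^(0) = 1, for every n ≥ 1 one has componentwise p^(n) ≤ p^(n−1), p̃^(n) ≤ p̃^(n−1), (E^(n))^+ ≤ (E^(n−1))^+ and (C^(n))^+ ≤ (C^(n−1))^+; in particular 0 ≤ p^(n)_i ≤ 1, 0 ≤ p̃^(n)_i ≤ 1, E^(n)_i ≤ (E^(0)_i)^+ and C^(n)_i ≤ (C^(0)_i)^+ for all n and i. -/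
open Finset

/-- The Solvency-Liquidity (SL) cascade map `𝒞 = ℒ ∘ 𝒮` acting on states
`(p, p̃, E, C)`: with current exposures `Ω_{ij} = p_i p̃_j Ω0_{ij}` and
`X_i = Σ_j Ω_{ij}`, the solvency step computes `ṗ_i = h(E_i/X_i)` (or `0` if
`X_i = 0`), `p'_i = p_i ṗ_i`, `E'_j = (E_j)⁺ − Σ_i (1−ṗ_i) Ω_{ij}` and the
intermediate interbank assets `Z̃_i = Σ_j ṗ_j Ω_{ji}`; the liquidity step then
computes `p̃̇_i = h(C_i/Z̃_i)` (or `0` if `Z̃_i = 0`), `p̃'_i = p̃_i p̃̇_i` and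
`C'_j = (C_j)⁺ − ṗ_j Σ_i (1−p̃̇_i) Ω_{ji}`. -/
noncomputable def SLmap {N : ℕ} (Ω0 : Fin N → Fin N → ℝ) :
    ((Fin N → ℝ) × (Fin N → ℝ) × (Fin N → ℝ) × (Fin N → ℝ)) →
      ((Fin N → ℝ) × (Fin N → ℝ) × (Fin N → ℝ) × (Fin N → ℝ)) := fun s =>
  let p := s.1
  let pt := s.2.1
  let E := s.2.2.1
  let C := s.2.2.2
  let Ω : Fin N → Fin N → ℝ := fun i j => p i * pt j * Ω0 i j
  let X : Fin N → ℝ := fun i => ∑ j, Ω i j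
  let pd : Fin N → ℝ := fun i => if 0 < X i then hthr (E i / X i) else 0
  let Zt : Fin N → ℝ := fun i => ∑ j, pd j * Ω j i
  let ptd : Fin N → ℝ := fun i => if 0 < Zt i then hthr (C i / Zt i) else 0
  (fun i => p i * pd i,
   fun i => pt i * ptd i,
   fun j => max (E j) 0 - ∑ i, (1 - pd i) * Ω i j,
   fun j => max (C j) 0 - pd j * ∑ i, (1 - ptd i) * Ω j i)


lemma hthr_nonneg (x : ℝ) : 0 ≤ hthr x := le_min zero_le_one (le_max_left _ _)

lemma hthr_le_one (x : ℝ) : hthr x ≤ 1 := min_le_left _ _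

lemma SL_step {N : ℕ} (Ω0 : Fin N → Fin N → ℝ) (hΩ : ∀ i j, 0 ≤ Ω0 i j)
    (s : (Fin N → ℝ) × (Fin N → ℝ) × (Fin N → ℝ) × (Fin N → ℝ))
    (hp : ∀ i, 0 ≤ s.1 i) (hpt : ∀ i, 0 ≤ s.2.1 i) (i : Fin N) :
    0 ≤ (SLmap Ω0 s).1 i ∧ (SLmap Ω0 s).1 i ≤ s.1 i ∧
    0 ≤ (SLmap Ω0 s).2.1 i ∧ (SLmap Ω0 s).2.1 i ≤ s.2.1 i ∧
    (SLmap Ω0 s).2.2.1 i ≤ max (s.2.2.1 i) 0 ∧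
    (SLmap Ω0 s).2.2.2 i ≤ max (s.2.2.2 i) 0 := by
  obtain ⟨p, pt, E, C⟩ := s
  simp only [SLmap] at *
  set Ω : Fin N → Fin N → ℝ := fun i j => p i * pt j * Ω0 i j with hΩdef
  have hΩnn : ∀ i j, 0 ≤ Ω i j := fun i j =>
    mul_nonneg (mul_nonneg (hp i) (hpt j)) (hΩ i j)
  set X : Fin N → ℝ := fun i => ∑ j, Ω i j with hX
  set pd : Fin N → ℝ := fun i => if 0 < X i then hthr (E i / X i) else 0 with hpd
  have hpd0 : ∀ i, 0 ≤ pd i := by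
    intro i; simp only [hpd]; split
    · exact hthr_nonneg _
    · exact le_refl 0
  have hpd1 : ∀ i, pd i ≤ 1 := by
    intro i; simp only [hpd]; split
    · exact hthr_le_one _
    · exact zero_le_one
  set Zt : Fin N → ℝ := fun i => ∑ j, pd j * Ω j i with hZt
  set ptd : Fin N → ℝ := fun i => if 0 < Zt i then hthr (C i / Zt i) else 0 with hptd
  have hptd0 : ∀ i, 0 ≤ ptd i := by
    intro i; simp only [hptd]; split
    · exact hthr_nonneg _
    · exact le_refl 0
  have hptd1 : ∀ i, ptd i ≤ 1 := by
    intro i; simp only [hptd]; split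
    · exact hthr_le_one _
    · exact zero_le_one
  refine ⟨mul_nonneg (hp i) (hpd0 i), mul_le_of_le_one_right (hp i) (hpd1 i),
    mul_nonneg (hpt i) (hptd0 i), mul_le_of_le_one_right (hpt i) (hptd1 i), ?_, ?_⟩
  · exact sub_le_self _ (Finset.sum_nonneg fun j _ =>
      mul_nonneg (by linarith [hpd1 j]) (hΩnn j i))
  · exact sub_le_self _ (mul_nonneg (hpd0 i) (Finset.sum_nonneg fun j _ =>
      mul_nonneg (by linarith [hptd1 j]) (hΩnn i j)))

/-- Monotonicity of the Solvency-Liquidity cascade: along the SL cascade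
iterates started from `p^(0) = p̃^(0) = 1`, for every `n ≥ 1` one has
componentwise `p^(n) ≤ p^(n−1)`, `p̃^(n) ≤ p̃^(n−1)`, `(E^(n))⁺ ≤ (E^(n−1))⁺`
and `(C^(n))⁺ ≤ (C^(n−1))⁺`; in particular `0 ≤ p^(n)_i ≤ 1`,
`0 ≤ p̃^(n)_i ≤ 1`, `E^(n)_i ≤ (E^(0)_i)⁺` and `C^(n)_i ≤ (C^(0)_i)⁺`. -/
theorem SL_cascade_monotone {N : ℕ} (hN : 1 ≤ N)
    (Ω0 : Fin N → Fin N → ℝ) (hΩ : ∀ i j, 0 ≤ Ω0 i j)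
    (hdiag : ∀ i, Ω0 i i = 0) (E0 C0 : Fin N → ℝ) :
    (∀ n : ℕ, ∀ i,
      ((SLmap Ω0)^[n + 1] (fun _ => 1, fun _ => 1, E0, C0)).1 i ≤
        ((SLmap Ω0)^[n] (fun _ => 1, fun _ => 1, E0, C0)).1 i ∧
      ((SLmap Ω0)^[n + 1] (fun _ => 1, fun _ => 1, E0, C0)).2.1 i ≤
        ((SLmap Ω0)^[n] (fun _ => 1, fun _ => 1, E0, C0)).2.1 i ∧
      max (((SLmap Ω0)^[n + 1] (fun _ => 1, fun _ => 1, E0, C0)).2.2.1 i) 0 ≤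
        max (((SLmap Ω0)^[n] (fun _ => 1, fun _ => 1, E0, C0)).2.2.1 i) 0 ∧
      max (((SLmap Ω0)^[n + 1] (fun _ => 1, fun _ => 1, E0, C0)).2.2.2 i) 0 ≤
        max (((SLmap Ω0)^[n] (fun _ => 1, fun _ => 1, E0, C0)).2.2.2 i) 0) ∧
    (∀ n : ℕ, ∀ i,
      0 ≤ ((SLmap Ω0)^[n] (fun _ => 1, fun _ => 1, E0, C0)).1 i ∧
      ((SLmap Ω0)^[n] (fun _ => 1, fun _ => 1, E0, C0)).1 i ≤ 1 ∧
      0 ≤ ((SLmap Ω0)^[n] (fun _ => 1, fun _ => 1, E0, C0)).2.1 i ∧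
      ((SLmap Ω0)^[n] (fun _ => 1, fun _ => 1, E0, C0)).2.1 i ≤ 1 ∧
      ((SLmap Ω0)^[n] (fun _ => 1, fun _ => 1, E0, C0)).2.2.1 i ≤
        max (E0 i) 0 ∧
      ((SLmap Ω0)^[n] (fun _ => 1, fun _ => 1, E0, C0)).2.2.2 i ≤
        max (C0 i) 0) := by
  set f := SLmap Ω0 with hf
  set x0 : (Fin N → ℝ) × (Fin N → ℝ) × (Fin N → ℝ) × (Fin N → ℝ) :=
    (fun _ => 1, fun _ => 1, E0, C0) with hx0
  have inv : ∀ n : ℕ, ∀ i,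
      0 ≤ (f^[n] x0).1 i ∧ (f^[n] x0).1 i ≤ 1 ∧
      0 ≤ (f^[n] x0).2.1 i ∧ (f^[n] x0).2.1 i ≤ 1 ∧
      (f^[n] x0).2.2.1 i ≤ max (E0 i) 0 ∧
      (f^[n] x0).2.2.2 i ≤ max (C0 i) 0 := by
    intro n
    induction n with
    | zero =>
      intro i
      exact ⟨zero_le_one, le_refl 1, zero_le_one, le_refl 1, le_max_left _ _,
        le_max_left _ _⟩
    | succ n ih =>
      intro i
      rw [Function.iterate_succ_apply']
      obtain ⟨h1, h2, h3, h4, h5, h6⟩ :=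
        SL_step Ω0 hΩ (f^[n] x0) (fun j => (ih j).1) (fun j => (ih j).2.2.1) i
      refine ⟨h1, h2.trans (ih i).2.1, h3, h4.trans (ih i).2.2.2.1, ?_, ?_⟩
      · exact h5.trans (max_le (ih i).2.2.2.2.1 (le_max_right _ _))
      · exact h6.trans (max_le (ih i).2.2.2.2.2 (le_max_right _ _))
  constructor
  · intro n i
    obtain ⟨h1, h2, h3, h4, h5, h6⟩ :=
      SL_step Ω0 hΩ (f^[n] x0) (fun j => (inv n j).1) (fun j => (inv n j).2.2.1) i
    rw [Function.iterate_succ_apply']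
    exact ⟨h2, h4, max_le h5 (le_max_right _ _), max_le h6 (le_max_right _ _)⟩
  · intro n i
    exact ⟨(inv n i).1, (inv n i).2.1, (inv n i).2.2.1, (inv n i).2.2.2.1,
      (inv n i).2.2.2.2.1, (inv n i).2.2.2.2.2⟩
end

section
/- Nonnegative buffers at SL cascade equilibria: if (p, p̃, E, C) with p, p̃ ∈ [0,1]^N is a fixed point of the SL cascade map 𝒞, i.e. applying one update step returns the same state, then E_j ≥ 0 and C_j ≥ 0 for every bank j; thus in a cascade equilibrium every insolvent bank has exactly zero equity and every illiquid bank has exactly zero cash. -/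
open Finset

/-- Nonnegative buffers at SL cascade equilibria: if `(p, p̃, E, C)` with
`p, p̃ ∈ [0,1]^N` is a fixed point of the SL cascade map, then `E_j ≥ 0` and
`C_j ≥ 0` for every bank `j`; thus in a cascade equilibrium every insolvent
bank (`E_j ≤ 0`) has exactly zero equity and every illiquid bank (`C_j ≤ 0`)
has exactly zero cash. -/
theorem SL_fixed_point_nonneg_buffers {N : ℕ} (hN : 1 ≤ N)
    (Ω0 : Fin N → Fin N → ℝ) (hΩ : ∀ i j, 0 ≤ Ω0 i j)
    (hdiag : ∀ i, Ω0 i i = 0)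
    (s : (Fin N → ℝ) × (Fin N → ℝ) × (Fin N → ℝ) × (Fin N → ℝ))
    (hp : ∀ i, 0 ≤ s.1 i ∧ s.1 i ≤ 1) (hpt : ∀ i, 0 ≤ s.2.1 i ∧ s.2.1 i ≤ 1)
    (hfix : SLmap Ω0 s = s) :
    ∀ j, (0 ≤ s.2.2.1 j ∧ 0 ≤ s.2.2.2 j) ∧
      (s.2.2.1 j ≤ 0 → s.2.2.1 j = 0) ∧ (s.2.2.2 j ≤ 0 → s.2.2.2 j = 0) := by
  obtain ⟨p, pt, E, C⟩ := s
  simp only [SLmap, Prod.mk.injEq] at hfix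
  obtain ⟨hpfix, hptfix, hEfix, hCfix⟩ := hfix
  simp only at hp hpt ⊢
  set Ω : Fin N → Fin N → ℝ := fun i j => p i * pt j * Ω0 i j with hΩdef
  set X : Fin N → ℝ := fun i => ∑ j, Ω i j with hX
  set pd : Fin N → ℝ := fun i => if 0 < X i then hthr (E i / X i) else 0 with hpd
  set Zt : Fin N → ℝ := fun i => ∑ j, pd j * Ω j i with hZt
  set ptd : Fin N → ℝ := fun i => if 0 < Zt i then hthr (C i / Zt i) else 0 with hptd
  have hΩnn : ∀ i j, 0 ≤ Ω i j := fun i j =>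
    mul_nonneg (mul_nonneg (hp i).1 (hpt j).1) (hΩ i j)
  have hpd01 : ∀ i, 0 ≤ pd i ∧ pd i ≤ 1 := by
    intro i
    simp only [hpd]
    split
    · exact ⟨le_min zero_le_one (le_max_left 0 _), min_le_left _ _⟩
    · exact ⟨le_refl 0, zero_le_one⟩
  have hptd01 : ∀ i, 0 ≤ ptd i ∧ ptd i ≤ 1 := by
    intro i
    simp only [hptd]
    split
    · exact ⟨le_min zero_le_one (le_max_left 0 _), min_le_left _ _⟩
    · exact ⟨le_refl 0, zero_le_one⟩
  -- E nonneg
  have hEnn : ∀ j, 0 ≤ E j := by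
    intro j
    by_contra hneg
    push_neg at hneg
    have hEeq := congrFun hEfix j
    have hmax : max (E j) 0 = 0 := max_eq_right hneg.le
    rw [hmax] at hEeq
    have hSpos : 0 < ∑ i, (1 - pd i) * Ω i j := by linarith
    obtain ⟨i, _, hi⟩ : ∃ i ∈ Finset.univ, 0 < (1 - pd i) * Ω i j := by
      by_contra hall
      push_neg at hall
      have : ∑ i, (1 - pd i) * Ω i j ≤ 0 :=
        Finset.sum_nonpos fun i _ => hall i (Finset.mem_univ i)
      linarith
    have hpdi : pd i < 1 := by
      rcases lt_or_ge (pd i) 1 with h | h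
      · exact h
      · exfalso; nlinarith [hΩnn i j]
    have hΩpos : 0 < Ω i j := by nlinarith [hΩnn i j]
    have hpi : 0 < p i := by
      have := hΩpos
      by_contra hle
      push_neg at hle
      have : p i = 0 := le_antisymm hle (hp i).1
      simp [hΩdef, this] at hΩpos
    have hpeq : p i * pd i = p i := congrFun hpfix i
    have : pd i = 1 := mul_left_cancel₀ hpi.ne' (by rw [mul_one]; exact hpeq)
    linarith
  have hCnn : ∀ j, 0 ≤ C j := by
    intro j
    by_contra hneg
    push_neg at hneg
    have hCeq := congrFun hCfix j
    have hmax : max (C j) 0 = 0 := max_eq_right hneg.le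
    rw [hmax] at hCeq
    have hSpos : 0 < pd j * ∑ i, (1 - ptd i) * Ω j i := by linarith
    have hTpos : 0 < ∑ i, (1 - ptd i) * Ω j i := by
      rcases lt_or_ge 0 (∑ i, (1 - ptd i) * Ω j i) with h | h
      · exact h
      · exfalso; nlinarith [(hpd01 j).1]
    obtain ⟨i, _, hi⟩ : ∃ i ∈ Finset.univ, 0 < (1 - ptd i) * Ω j i := by
      by_contra hall
      push_neg at hall
      have : ∑ i, (1 - ptd i) * Ω j i ≤ 0 :=
        Finset.sum_nonpos fun i _ => hall i (Finset.mem_univ i)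
      linarith
    have hptdi : ptd i < 1 := by
      rcases lt_or_ge (ptd i) 1 with h | h
      · exact h
      · exfalso; nlinarith [hΩnn j i]
    have hΩpos : 0 < Ω j i := by nlinarith [hΩnn j i]
    have hpti : 0 < pt i := by
      by_contra hle
      push_neg at hle
      have : pt i = 0 := le_antisymm hle (hpt i).1
      simp [hΩdef, this] at hΩpos
    have hpeq : pt i * ptd i = pt i := congrFun hptfix i
    have : ptd i = 1 := mul_left_cancel₀ hpti.ne' (by rw [mul_one]; exact hpeq)
    linarith
  intro j
  exact ⟨⟨hEnn j, hCnn j⟩, fun h => le_antisymm h (hEnn j),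
    fun h => le_antisymm h (hCnn j)⟩
end

section
/- Stock-flow consistency of the solvency step: let X > 0, D > 0 and A, C, Z_old, E be real numbers satisfying the accounting identity A + C + Z_old = X + D + E, and suppose E ≥ −X − D. Set ṗ = h(E/X), q̇ = h((X + E)/D), X' = ṗ·X and D' = q̇·D, where h(x) = min(1, max(0, x+1)). Then for any real number Z_new, the updated equity defined by the accounting identity, E' := A + C + Z_new − D' − X', satisfies E' = (E)^+ + Z_new − Z_old. In particular, after a bank's creditors mark interbank assets to Z_new, its equity equals its previous positive part of equity minus the loss Z_old − Z_new on interbank assets. -/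
lemma hthr_mul (a c : ℝ) (hc : 0 < c) : hthr (a / c) * c = min c (max 0 (a + c)) := by
  unfold hthr
  have h1 : a / c + 1 = (a + c) / c := by field_simp
  rw [h1]
  rcases le_total (a + c) 0 with h | h
  · rw [max_eq_left (div_nonpos_of_nonpos_of_nonneg h hc.le),
      max_eq_left h, min_eq_right hc.le, min_eq_right zero_le_one]
    ring
  · rw [max_eq_right (div_nonneg h hc.le), max_eq_right h]
    rcases le_total (a + c) c with h2 | h2
    · rw [min_eq_right ((div_le_one hc).2 h2), min_eq_right h2]
      field_simp
    · rw [min_eq_left ((one_le_div hc).2 h2), min_eq_left h2, one_mul]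

/-- Stock-flow consistency of the solvency step: with interbank debt revalued
at `ṗ = h(E/X)` and external debt at `q̇ = h((X+E)/D)`, after the bank's
creditors mark its interbank assets to `Znew` the equity defined by the
accounting identity equals `(E)⁺ + Znew − Zold`. -/
theorem solvency_step_stock_flow (X D A C Zold E : ℝ)
    (hX : 0 < X) (hD : 0 < D)
    (hacc : A + C + Zold = X + D + E) (hE : -X - D ≤ E) :
    ∀ Znew : ℝ,
      A + C + Znew - hthr ((X + E) / D) * D - hthr (E / X) * X =
        max E 0 + Znew - Zold := by
  intro Znew
  rw [hthr_mul _ _ hD, hthr_mul _ _ hX]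
  rcases le_total 0 E with h | h
  · rw [max_eq_right (by linarith : (0:ℝ) ≤ X + E + D), min_eq_left (by linarith),
      max_eq_right (by linarith : (0:ℝ) ≤ E + X), min_eq_left (by linarith),
      max_eq_left h]
    linarith
  · rcases le_total 0 (E + X) with h2 | h2
    · rw [max_eq_right (by linarith : (0:ℝ) ≤ X + E + D), min_eq_left (by linarith),
        max_eq_right h2, min_eq_right (by linarith), max_eq_right h]
      linarith
    · rw [max_eq_right (by linarith : (0:ℝ) ≤ X + E + D), min_eq_right (by linarith),
        max_eq_left h2, min_eq_right hX.le, max_eq_right h]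
      linarith
end

section
/- Equity invariance of the liquidity step: let Z > 0, A > 0 and C, X, D, E be real numbers satisfying the accounting identity Z + A + C = X + D + E, and suppose C ≥ −Z − A. Set p̃ = h(C/Z) and q̃ = h((C + Z)/A), where h(x) = min(1, max(0, x+1)), and for any R ≥ 0 (the amount of the bank's interbank debt recalled by its creditors) define the updated balance sheet Z' = p̃·Z, A' = q̃·A, C' = (C)^+ − R, X' = X − R, D' = D. Then the updated equity E' := Z' + A' + C' − X' − D' equals E; that is, the liquidity step of selling assets to repay the overdraft and repaying recalled interbank debt in cash leaves the bank's equity unchanged. -/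
/-- Equity invariance of the liquidity step: an illiquid bank selling the
fraction `1 − p̃` of its interbank assets (`p̃ = h(C/Z)`) and `1 − q̃` of its
external assets (`q̃ = h((C+Z)/A)`) to repay its overdraft, while repaying the
recalled amount `R` of interbank debt in cash, keeps its equity unchanged:
`Z' + A' + C' − X' − D' = E` where `Z' = p̃·Z`, `A' = q̃·A`, `C' = (C)⁺ − R`,
`X' = X − R`, `D' = D`. -/
theorem liquidity_step_equity_invariance (Z A C X D E R : ℝ)
    (hZ : 0 < Z) (hA : 0 < A)
    (hacc : Z + A + C = X + D + E) (hC : -Z - A ≤ C) (hR : 0 ≤ R) :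
    hthr (C / Z) * Z + hthr ((C + Z) / A) * A + (max C 0 - R) - (X - R) - D
      = E := by
  have key : hthr (C / Z) * Z + hthr ((C + Z) / A) * A + max C 0 = Z + A + C := by
    unfold hthr
    rcases le_or_gt 0 C with h0 | h0
    · rw [max_eq_left h0]
      have h1 : (1:ℝ) ≤ C / Z + 1 := by
        have := div_nonneg h0 hZ.le; linarith
      have h2 : (1:ℝ) ≤ (C + Z) / A + 1 := by
        have : 0 ≤ (C + Z) / A := div_nonneg (by linarith) hA.le; linarith
      rw [max_eq_right (by linarith), max_eq_right (by linarith),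
        min_eq_left h1, min_eq_left h2]
      ring
    · rw [max_eq_right h0.le]
      rcases le_or_gt (-Z) C with h1 | h1
      · -- -Z ≤ C < 0 : p̃ = C/Z+1, q̃ = 1
        have hp0 : (0:ℝ) ≤ C / Z + 1 := by
          have : -1 ≤ C / Z := by
            rw [neg_le, ← neg_div]
            exact (div_le_one hZ).mpr (by linarith)
          linarith
        have hp1 : C / Z + 1 ≤ 1 := by
          have : C / Z ≤ 0 := div_nonpos_of_nonpos_of_nonneg h0.le hZ.le
          linarith
        have hq : (1:ℝ) ≤ (C + Z) / A + 1 := by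
          have : 0 ≤ (C + Z) / A := div_nonneg (by linarith) hA.le; linarith
        rw [max_eq_right hp0, min_eq_right hp1, max_eq_right (by linarith),
          min_eq_left hq, div_add' _ _ _ hZ.ne', div_mul_cancel₀ _ hZ.ne']
        ring
      · -- C < -Z : p̃ = 0, q̃ = (C+Z)/A + 1
        have hp : C / Z + 1 ≤ 0 := by
          have : C / Z ≤ -1 := by
            rw [div_le_iff₀ hZ]; linarith
          linarith
        have hq0 : (0:ℝ) ≤ (C + Z) / A + 1 := by
          have : -1 ≤ (C + Z) / A := by
            rw [neg_le, ← neg_div]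
            exact (div_le_one hA).mpr (by linarith)
          linarith
        have hq1 : (C + Z) / A + 1 ≤ 1 := by
          have : (C + Z) / A ≤ 0 := div_nonpos_of_nonpos_of_nonneg (by linarith) hA.le
          linarith
        rw [max_eq_left hp, min_eq_right zero_le_one, max_eq_right hq0, min_eq_right hq1,
          div_add' _ _ _ hA.ne', div_mul_cancel₀ _ hA.ne']
        ring
  linarith
end
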